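/- In every DP-chain, the ternary discriminator is definable: the term t(x,y,z) := (Δ(x ↔ y) ∧ z) ∨ (¬Δ(x ↔ y) ∧ x), with Δu := u * u and u ↔ v := (u ⇒ v) ∧ (v ⇒ u), satisfies t(x,x,z) = z and t(x,y,z) = x whenever x ≠ y. -/

import Mathlib

/-- A DP-chain: an MTL-chain (linearly ordered, bounded, integral, commutative
residuated lattice) with a coatom, in which `x * x = 0` for all `x < 1`. -/
structure DPChain (α : Type*) [LinearOrder α] [Zero α] [One α] where
  zero_le : ∀ x : α, 0 ≤ x
  le_one : ∀ x : α, x ≤ 1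
  mul : α → α → α
  imp : α → α → α
  mul_comm : ∀ x y, mul x y = mul y x
  mul_assoc : ∀ x y z, mul (mul x y) z = mul x (mul y z)
  mul_one : ∀ x, mul x 1 = x
  mul_le_mul : ∀ x y z : α, x ≤ y → mul x z ≤ mul y z
  residuation : ∀ x y z : α, mul x y ≤ z ↔ x ≤ imp y z
  coatom : α
  coatom_lt_one : coatom < 1
  le_coatom : ∀ x : α, x < 1 → x ≤ coatom
  mul_self_eq_zero : ∀ x : α, x < 1 → mul x x = 0

/-- The biimplication `u ↔ v` in a DP-chain. -/
def DPChain.biimp {α : Type*} [LinearOrder α] [Zero α] [One α]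
    (M : DPChain α) (u v : α) : α := min (M.imp u v) (M.imp v u)

/-- The Baaz Delta `Δu = u * u` in a DP-chain. -/
def DPChain.delta {α : Type*} [LinearOrder α] [Zero α] [One α]
    (M : DPChain α) (u : α) : α := M.mul u u

/-- The candidate discriminator term
`t(x,y,z) = (Δ(x ↔ y) ∧ z) ∨ (¬Δ(x ↔ y) ∧ x)`. -/
def DPChain.disc {α : Type*} [LinearOrder α] [Zero α] [One α]
    (M : DPChain α) (x y z : α) : α :=
  max (min (M.delta (M.biimp x y)) z) (min (M.imp (M.delta (M.biimp x y)) 0) x)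

/-!
Δ collapses the chain onto {0, 1}: Δ1 = 1, while Δu = u * u = 0 for every u < 1. The
biimplication x ↔ y equals 1 exactly when x = y, since x ⇒ y < 1 as soon as y < x. So
Δ(x ↔ y) is the Boolean test for x = y, and t selects z or x accordingly.
-/

namespace DPChain

variable {α : Type*} [LinearOrder α] [Zero α] [One α] (M : DPChain α)

lemma one_mul (x : α) : M.mul 1 x = x := by rw [M.mul_comm, M.mul_one]

lemma imp_eq_one_of_le {x y : α} (h : x ≤ y) : M.imp x y = 1 :=
  le_antisymm (M.le_one _) ((M.residuation 1 x y).1 (by rwa [M.one_mul]))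

lemma one_imp (y : α) : M.imp 1 y = y := by
  apply le_antisymm
  · simpa only [M.mul_one] using (M.residuation (M.imp 1 y) 1 y).2 le_rfl
  · exact (M.residuation y 1 y).1 (by rw [M.mul_one])

lemma imp_lt_one_of_lt {x y : α} (h : y < x) : M.imp x y < 1 := by
  refine lt_of_le_of_ne (M.le_one _) fun h1 => h.not_ge ?_
  simpa only [M.one_mul] using (M.residuation 1 x y).2 h1.ge

lemma biimp_self (x : α) : M.biimp x x = 1 := by
  simp only [biimp, M.imp_eq_one_of_le le_rfl, min_self]

lemma biimp_lt_one_of_ne {x y : α} (h : x ≠ y) : M.biimp x y < 1 := by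
  rcases h.lt_or_gt with hxy | hyx
  · exact (min_le_right _ _).trans_lt (M.imp_lt_one_of_lt hxy)
  · exact (min_le_left _ _).trans_lt (M.imp_lt_one_of_lt hyx)

lemma delta_one : M.delta 1 = 1 := M.mul_one 1

lemma delta_eq_zero_of_lt_one {u : α} (h : u < 1) : M.delta u = 0 := M.mul_self_eq_zero u h

lemma disc_self (x z : α) : M.disc x x z = z := by
  rw [disc, biimp_self, delta_one, one_imp, min_eq_right (M.le_one z),
    min_eq_left (M.zero_le x), max_eq_left (M.zero_le z)]

lemma disc_of_ne {x y : α} (z : α) (h : x ≠ y) : M.disc x y z = x := by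
  rw [disc, M.delta_eq_zero_of_lt_one (M.biimp_lt_one_of_ne h), M.imp_eq_one_of_le le_rfl,
    min_eq_left (M.zero_le z), min_eq_right (M.le_one x), max_eq_right (M.zero_le x)]

end DPChain

/-- In every DP-chain the ternary discriminator is definable. -/
theorem dpChain_discriminator {α : Type*} [LinearOrder α] [Zero α] [One α]
    (M : DPChain α) :
    ∀ x y z : α, M.disc x x z = z ∧ (x ≠ y → M.disc x y z = x) :=
  fun x _ z => ⟨M.disc_self x z, M.disc_of_ne z⟩
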